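/- Let p be an odd prime and define L(d) = ∑_{i=(p+1)/2}^{p-1} ( ⌊i·d/p⌋ - ⌊i·d/p - (1 - 1/p)·(p+1)·d/(2p)⌋ ). If d₁, d₂ are positive integers with p ∤ d₁, p ∤ d₂ and d₁ ≡ d₂ (mod p²), d₁ ≤ d₂, then L(d₂) = L(d₁) + ((d₂ - d₁)/p²)·((p-1)/2)·((p²-1)/2). -/

import Mathlib

/-!
Replacing `d` by `d + p²` shifts the first argument of each summand of `L p d` by the integer
`i p` and the second by `i p - (p² - 1)/2`, which is an integer because `p` is odd. So each of
the `(p - 1)/2` summands grows by exactly `(p² - 1)/2`, and iterating gives the theorem.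
-/

/-- The Booher–Cais lower bound `L(d)` specialized to `j = (p+1)/2`. -/
def L (p d : ℕ) : ℤ :=
  ∑ i ∈ Finset.Icc ((p + 1) / 2) (p - 1),
    (⌊((i : ℚ) * d) / p⌋ -
      ⌊((i : ℚ) * d) / p - (1 - 1 / (p : ℚ)) * (((p : ℚ) + 1) * d) / (2 * p)⌋)

section

variable {p : ℕ}

theorem Odd.cast_sq_sub_one_div_two (hp : Odd p) :
    (((p ^ 2 - 1) / 2 : ℕ) : ℚ) = ((p : ℚ) ^ 2 - 1) / 2 := by
  have h1 : 1 ≤ p ^ 2 := Nat.one_le_pow _ _ hp.pos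
  have h2 : 2 ∣ p ^ 2 - 1 :=
    even_iff_two_dvd.mp ((Nat.even_sub h1).mpr (by simp [Nat.not_even_iff_odd, hp.pow]))
  rw [Nat.cast_div h2 two_ne_zero, Nat.cast_sub h1]
  push_cast
  ring

theorem Odd.card_Icc_succ_div_two (hp : Odd p) :
    (Finset.Icc ((p + 1) / 2) (p - 1)).card = (p - 1) / 2 := by
  obtain ⟨k, rfl⟩ := hp
  rw [Nat.card_Icc]
  omega

end

namespace L

def summand (p d i : ℕ) : ℤ :=
  ⌊((i : ℚ) * d) / p⌋ - ⌊((i : ℚ) * d) / p - (1 - 1 / (p : ℚ)) * (((p : ℚ) + 1) * d) / (2 * p)⌋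

theorem eq_sum_summand (p d : ℕ) :
    L p d = ∑ i ∈ Finset.Icc ((p + 1) / 2) (p - 1), summand p d i :=
  rfl

variable {p : ℕ}

theorem summand_add_sq (hp : Odd p) (d i : ℕ) :
    summand p (d + p ^ 2) i = summand p d i + ((p ^ 2 - 1) / 2 : ℕ) := by
  have hp0 : (p : ℚ) ≠ 0 := by exact_mod_cast hp.pos.ne'
  have hfirst : ((i : ℚ) * ((d + p ^ 2 : ℕ) : ℚ)) / p = ((i : ℚ) * d) / p + ((i * p : ℤ) : ℚ) := by
    push_cast
    field_simp
  have hsecond : ((i : ℚ) * ((d + p ^ 2 : ℕ) : ℚ)) / p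
        - (1 - 1 / (p : ℚ)) * (((p : ℚ) + 1) * ((d + p ^ 2 : ℕ) : ℚ)) / (2 * p)
      = (((i : ℚ) * d) / p - (1 - 1 / (p : ℚ)) * (((p : ℚ) + 1) * d) / (2 * p))
        + ((i * p - ((p ^ 2 - 1) / 2 : ℕ) : ℤ) : ℚ) := by
    rw [Int.cast_sub, Int.cast_natCast, hp.cast_sq_sub_one_div_two]
    push_cast
    field_simp
    ring
  rw [summand, summand, hsecond, hfirst, Int.floor_add_intCast, Int.floor_add_intCast]
  ring

theorem add_sq (hp : Odd p) (d : ℕ) :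
    L p (d + p ^ 2) = L p d + ((p - 1) / 2 * ((p ^ 2 - 1) / 2) : ℕ) := by
  rw [eq_sum_summand, eq_sum_summand, Finset.sum_congr rfl fun i _ => summand_add_sq hp d i,
    Finset.sum_add_distrib, Finset.sum_const, hp.card_Icc_succ_div_two, nsmul_eq_mul]
  push_cast
  ring

theorem add_mul_sq (hp : Odd p) (d n : ℕ) :
    L p (d + n * p ^ 2) = L p d + (n * ((p - 1) / 2 * ((p ^ 2 - 1) / 2)) : ℕ) := by
  induction n with
  | zero => simp
  | succ n ih =>
    rw [add_one_mul, ← add_assoc, add_sq hp, ih]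
    push_cast
    ring

end L

theorem stmt_16_general (p d₁ d₂ : ℕ) (hodd : Odd p)
    (hcong : d₁ ≡ d₂ [MOD p ^ 2]) (hle : d₁ ≤ d₂) :
    L p d₂ = L p d₁ + (((d₂ - d₁) / p ^ 2) * (((p - 1) / 2) * ((p ^ 2 - 1) / 2)) : ℕ) := by
  obtain ⟨n, hn⟩ := (Nat.modEq_iff_dvd' hle).mp hcong
  have hp2 : 0 < p ^ 2 := pow_pos hodd.pos 2
  have hd₂ : d₂ = d₁ + n * p ^ 2 := by rw [mul_comm, ← hn]; omega
  rw [hn, Nat.mul_div_cancel_left _ hp2, hd₂, L.add_mul_sq hodd]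

theorem stmt_16 (p d₁ d₂ : ℕ) (hp : p.Prime) (hodd : Odd p)
    (hd₁ : 0 < d₁) (hd₂ : 0 < d₂) (hpd₁ : ¬ p ∣ d₁) (hpd₂ : ¬ p ∣ d₂)
    (hcong : d₁ ≡ d₂ [MOD p ^ 2]) (hle : d₁ ≤ d₂) :
    L p d₂ = L p d₁ + (((d₂ - d₁) / p ^ 2) * (((p - 1) / 2) * ((p ^ 2 - 1) / 2)) : ℕ) :=
  stmt_16_general p d₁ d₂ hodd hcong hle
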